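/- arXiv:1410.0415 — 2 statements merged into one kernel-verified Lean document; each statement's English description precedes it below -/
import Mathlib

section
/- Let p be an odd prime, μ the Haar probability measure on Z_p, and η ∈ Z_p a nonzero element of even valuation 2m that is not a square in Q_p. Then (1 + p^{−1})^{−1} · ∫_{x ∈ Z_p} ( ∫_{{y ∈ Z_p : |η − x²|_p ≤ |y|_p}} |y|_p^{−1} dμ(y) ) dμ(x) = 1 − 2·p^{−m}/(p+1). -/
/-!
When `p` is odd and `η` is not a square, the ultrametric inequality together with Hensel's lemma
for `X ^ 2 - η` gives `‖η - x ^ 2‖ = max ‖η‖ ‖x‖ ^ 2`, so both integrands depend only on norms.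
Such integrals split over the spheres `‖x‖ = p ^ (-j)`: the ball `p ^ n ℤ_[p]` is the kernel of
`ℤ_[p] → ℤ/p^n`, of index `p ^ n`, so the sphere of radius `p ^ (-j)` has measure
`p ^ (-j) (1 - p⁻¹)`. Hence each sphere contributes `1 - p⁻¹` to the inner integral, which equals
`(k + 1)(1 - p⁻¹)` at radius `p ^ (-k)`, and the outer integral is an arithmetico-geometric sum.
-/

open MeasureTheory Metric Set Function
open scoped ENNReal

theorem sum_range_odd_mul_geom_add {R : Type*} [CommRing R] (q : R) (m : ℕ) :
    (2 * m + 1) * (1 - q) * q ^ m + ∑ j ∈ Finset.range m, (2 * j + 1) * (1 - q) ^ 2 * q ^ j =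
      1 + q - 2 * q ^ (m + 1) := by
  induction m with
  | zero => simp; ring
  | succ m ih =>
    rw [Finset.sum_range_succ]
    push_cast
    linear_combination ih

section Sphere

variable {E : Type*} [SeminormedAddCommGroup E] [MeasurableSpace E] [OpensMeasurableSpace E]
  (μ : Measure E) (F : ℝ → ℝ) (r : ℝ)

theorem integrableOn_sphere_comp_norm [IsFiniteMeasure μ] :
    IntegrableOn (fun x => F ‖x‖) (sphere (0 : E) r) μ :=
  (integrableOn_const (μ := μ) (C := F r)).congr_fun
    (fun x hx => by rw [mem_sphere_zero_iff_norm.mp hx]) isClosed_sphere.measurableSet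

theorem setIntegral_sphere_comp_norm :
    ∫ x in sphere (0 : E) r, F ‖x‖ ∂μ = μ.real (sphere 0 r) * F r := by
  rw [setIntegral_congr_fun isClosed_sphere.measurableSet
    (fun x hx => by rw [mem_sphere_zero_iff_norm.mp hx]), setIntegral_const, smul_eq_mul]

end Sphere

namespace PadicInt

variable {p : ℕ} [hp : Fact p.Prime]

open Polynomial in
theorem norm_sub_sq_eq_max (hp2 : p ≠ 2) {η : ℤ_[p]} (hη : ¬ ∃ x : ℚ_[p], x ^ 2 = η)
    (x : ℤ_[p]) : ‖η - x ^ 2‖ = max ‖η‖ (‖x‖ ^ 2) := by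
  rw [← norm_pow, sub_eq_add_neg, ← norm_neg (x ^ 2)]
  rcases ne_or_eq ‖η‖ ‖-x ^ 2‖ with hne | heq
  · exact norm_add_eq_max_of_ne hne
  rw [← heq, max_self]
  refine le_antisymm ((nonarchimedean η _).trans_eq (by rw [heq, max_self]))
    (not_lt.mp fun hlt => hη ?_)
  have h2 : ‖(2 : ℤ_[p])‖ = 1 := by
    exact_mod_cast norm_natCast_eq_one_iff.mpr ((Nat.coprime_primes hp.out Nat.prime_two).mpr hp2)
  -- Hensel's lemma for `X ^ 2 - η` at `x` applies because `‖2 * x‖ ^ 2 = ‖x‖ ^ 2 = ‖η‖`.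
  obtain ⟨z, hz, -⟩ := hensels_lemma (F := X ^ 2 - C η) (a := x) (by
    simpa [norm_sub_rev, norm_mul, one_add_one_eq_two, h2, heq, ← sub_eq_add_neg] using hlt)
  exact ⟨z, by simpa [sub_eq_zero] using congrArg ((↑) : ℤ_[p] → ℚ_[p]) hz⟩

theorem norm_le_zpow_succ_iff (x : ℤ_[p]) (n : ℕ) :
    ‖x‖ ≤ (p : ℝ) ^ (-(n + 1 : ℕ) : ℤ) ↔ ‖x‖ < p ^ (-n : ℤ) := by
  rw [norm_le_pow_iff_norm_lt_pow_add_one]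
  push_cast
  ring_nf

theorem closedBall_zero_zpow_eq_ker (n : ℕ) :
    closedBall (0 : ℤ_[p]) (p ^ (-n : ℤ)) = (toZModPow (p := p) n).toAddMonoidHom.ker := by
  ext x
  rw [mem_closedBall_zero_iff, norm_le_pow_iff_mem_span_pow, ← ker_toZModPow]
  rfl

theorem sphere_zero_zpow_eq_diff (n : ℕ) :
    sphere (0 : ℤ_[p]) (p ^ (-n : ℤ)) =
      closedBall 0 (p ^ (-n : ℤ)) \ closedBall 0 (p ^ (-(n + 1 : ℕ) : ℤ)) := by
  ext x
  rw [mem_sdiff, mem_sphere_zero_iff_norm, mem_closedBall_zero_iff, mem_closedBall_zero_iff,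
    norm_le_zpow_succ_iff, not_lt, le_antisymm_iff]

theorem setOf_zpow_lt_norm_eq_biUnion_sphere (n : ℕ) :
    {x : ℤ_[p] | (p : ℝ) ^ (-n : ℤ) < ‖x‖} = ⋃ j ∈ Finset.range n, sphere 0 (p ^ (-j : ℤ)) := by
  have hp1 : (1 : ℝ) < p := mod_cast hp.out.one_lt
  ext x
  simp only [mem_ofPred_eq, mem_iUnion, Finset.mem_range, mem_sphere_zero_iff_norm, exists_prop]
  constructor
  · intro hx
    have hx0 : x ≠ 0 := by rintro rfl; rw [norm_zero] at hx; exact hx.not_ge (by positivity)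
    rw [norm_eq_zpow_neg_valuation hx0, zpow_lt_zpow_iff_right₀ hp1] at hx
    exact ⟨x.valuation, by omega, norm_eq_zpow_neg_valuation hx0⟩
  · rintro ⟨j, hj, hx⟩
    rw [hx, zpow_lt_zpow_iff_right₀ hp1]
    omega

theorem pairwise_disjoint_sphere_zero_zpow :
    Pairwise (Disjoint on fun j : ℕ => sphere (0 : ℤ_[p]) (p ^ (-j : ℤ))) := by
  have hp1 : (1 : ℝ) < p := mod_cast hp.out.one_lt
  intro i j hij
  refine Set.disjoint_left.mpr fun x hi hj => hij ?_
  rw [mem_sphere_zero_iff_norm] at hi hj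
  exact_mod_cast neg_injective (zpow_right_injective₀ (by positivity) hp1.ne' (hi.symm.trans hj))

variable [MeasurableSpace ℤ_[p]] [BorelSpace ℤ_[p]] (μ : Measure ℤ_[p])

section FiniteMeasure

variable [IsFiniteMeasure μ] (F : ℝ → ℝ)

theorem integrableOn_zpow_lt_norm (n : ℕ) :
    IntegrableOn (fun x => F ‖x‖) {x : ℤ_[p] | (p : ℝ) ^ (-n : ℤ) < ‖x‖} μ := by
  rw [setOf_zpow_lt_norm_eq_biUnion_sphere]
  exact integrableOn_finset_iUnion.mpr fun j _ => integrableOn_sphere_comp_norm μ F _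

theorem setIntegral_zpow_lt_norm (n : ℕ) :
    ∫ x in {x : ℤ_[p] | (p : ℝ) ^ (-n : ℤ) < ‖x‖}, F ‖x‖ ∂μ =
      ∑ j ∈ Finset.range n, μ.real (sphere 0 (p ^ (-j : ℤ))) * F (p ^ (-j : ℤ)) := by
  rw [setOf_zpow_lt_norm_eq_biUnion_sphere, integral_biUnion_finset _
    (fun _ _ => isClosed_sphere.measurableSet) (pairwise_disjoint_sphere_zero_zpow.set_pairwise _)
    (fun j _ => integrableOn_sphere_comp_norm μ F _)]
  exact Finset.sum_congr rfl fun j _ => setIntegral_sphere_comp_norm μ F _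

theorem integral_comp_norm_of_eqOn_closedBall (n : ℕ) (c : ℝ)
    (hF : ∀ x : ℤ_[p], ‖x‖ ≤ p ^ (-n : ℤ) → F ‖x‖ = c) :
    ∫ x, F ‖x‖ ∂μ = μ.real (closedBall 0 (p ^ (-n : ℤ))) * c +
      ∑ j ∈ Finset.range n, μ.real (sphere 0 (p ^ (-j : ℤ))) * F (p ^ (-j : ℤ)) := by
  have hcompl : (closedBall (0 : ℤ_[p]) (p ^ (-n : ℤ)))ᶜ = {x | (p : ℝ) ^ (-n : ℤ) < ‖x‖} := by
    ext x; simp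
  have hball : EqOn (fun x => F ‖x‖) (fun _ => c) (closedBall (0 : ℤ_[p]) (p ^ (-n : ℤ))) :=
    fun x hx => hF x (mem_closedBall_zero_iff.mp hx)
  have hint : Integrable (fun x => F ‖x‖) μ := by
    rw [← integrableOn_univ, ← union_compl_self (closedBall 0 _), hcompl]
    exact ((integrableOn_const (C := c)).congr_fun hball.symm measurableSet_closedBall).union
      (integrableOn_zpow_lt_norm μ F n)
  rw [← integral_add_compl measurableSet_closedBall hint, hcompl, setIntegral_zpow_lt_norm,
    setIntegral_congr_fun measurableSet_closedBall hball, setIntegral_const, smul_eq_mul]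

end FiniteMeasure

theorem pow_mul_measure_closedBall_zero [μ.IsAddLeftInvariant] (n : ℕ) :
    (p : ℝ≥0∞) ^ n * μ (closedBall 0 (p ^ (-n : ℤ))) = μ univ := by
  have hsurj : Function.Surjective (toZModPow (p := p) n).toAddMonoidHom :=
    ZMod.ringHom_surjective _
  have hindex : (toZModPow (p := p) n).toAddMonoidHom.ker.index = p ^ n := by
    rw [AddSubgroup.index_ker, AddMonoidHom.range_eq_top.mpr hsurj, AddSubgroup.card_top,
      Nat.card_zmod]
  have : (toZModPow (p := p) n).toAddMonoidHom.ker.FiniteIndex :=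
    AddSubgroup.finiteIndex_iff.mpr (by rw [hindex]; exact pow_ne_zero n hp.out.ne_zero)
  rw [closedBall_zero_zpow_eq_ker, ← AddSubgroup.index_mul_measure _
    (closedBall_zero_zpow_eq_ker (p := p) n ▸ measurableSet_closedBall) μ, hindex]
  push_cast
  rfl

variable [μ.IsAddLeftInvariant] [IsProbabilityMeasure μ]

theorem measureReal_closedBall_zero (n : ℕ) :
    μ.real (closedBall 0 (p ^ (-n : ℤ))) = (p : ℝ) ^ (-n : ℤ) := by
  have h := pow_mul_measure_closedBall_zero μ n
  rw [measure_univ, mul_comm] at h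
  rw [measureReal_def, ENNReal.eq_inv_of_mul_eq_one_left h, ENNReal.toReal_inv,
    ENNReal.toReal_pow, ENNReal.toReal_natCast, zpow_neg, zpow_natCast]

theorem measureReal_sphere_zero (n : ℕ) :
    μ.real (sphere 0 (p ^ (-n : ℤ))) = (p : ℝ) ^ (-n : ℤ) * (1 - (p : ℝ)⁻¹) := by
  have hp0 : (p : ℝ) ≠ 0 := mod_cast hp.out.ne_zero
  have hsub : closedBall (0 : ℤ_[p]) (p ^ (-(n + 1 : ℕ) : ℤ)) ⊆ closedBall 0 (p ^ (-n : ℤ)) :=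
    closedBall_subset_closedBall (zpow_le_zpow_right₀ (mod_cast hp.out.one_le) (by omega))
  rw [sphere_zero_zpow_eq_diff, measureReal_sdiff hsub measurableSet_closedBall,
    measureReal_closedBall_zero, measureReal_closedBall_zero, Nat.cast_succ, neg_add,
    zpow_add₀ hp0, zpow_neg_one]
  ring

theorem setIntegral_zpow_le_norm_inv (k : ℕ) :
    ∫ y in {y : ℤ_[p] | (p : ℝ) ^ (-k : ℤ) ≤ ‖y‖}, ‖y‖⁻¹ ∂μ = (k + 1) * (1 - (p : ℝ)⁻¹) := by
  have hset : {y : ℤ_[p] | (p : ℝ) ^ (-k : ℤ) ≤ ‖y‖} =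
      {y | (p : ℝ) ^ (-(k + 1 : ℕ) : ℤ) < ‖y‖} := by
    ext y
    rw [mem_ofPred_eq, mem_ofPred_eq, ← not_lt, ← norm_le_zpow_succ_iff, not_le]
  have hp0 : (p : ℝ) ≠ 0 := mod_cast hp.out.ne_zero
  rw [hset, setIntegral_zpow_lt_norm μ (·⁻¹), Finset.sum_congr rfl fun j _ => by
    rw [measureReal_sphere_zero, mul_right_comm, mul_inv_cancel₀ (zpow_ne_zero _ hp0), one_mul],
    Finset.sum_const, Finset.card_range, nsmul_eq_mul]
  push_cast
  ring

end PadicInt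

open PadicInt

theorem stmt_18_general (p : ℕ) [Fact p.Prime] (hodd : p ≠ 2)
    [MeasurableSpace ℤ_[p]] [BorelSpace ℤ_[p]]
    (μ : Measure ℤ_[p]) [μ.IsAddHaarMeasure] (hμ : μ Set.univ = 1)
    (η : ℤ_[p]) (m : ℕ) (hval : η.valuation = 2 * m)
    (hsq : ¬ ∃ x : ℚ_[p], x ^ 2 = (η : ℚ_[p])) :
    (1 + (p : ℝ)⁻¹)⁻¹ *
        ∫ x : ℤ_[p], (∫ y in {y : ℤ_[p] | ‖η - x ^ 2‖ ≤ ‖y‖}, ‖y‖⁻¹ ∂μ) ∂μ =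
      1 - 2 * (p : ℝ) ^ (-(m : ℤ)) / ((p : ℝ) + 1) := by
  have : IsProbabilityMeasure μ := ⟨hμ⟩
  have hp1 : (1 : ℝ) < p := mod_cast (Fact.out : p.Prime).one_lt
  have hη : ‖η‖ = (p : ℝ) ^ (-(2 * m : ℕ) : ℤ) := by
    rw [norm_eq_zpow_neg_valuation (by rintro rfl; exact hsq ⟨0, by simp⟩), hval]
  have hsq_zpow (j : ℕ) : ((p : ℝ) ^ (-j : ℤ)) ^ 2 = p ^ (-(2 * j : ℕ) : ℤ) := by
    rw [← zpow_natCast, ← zpow_mul]; push_cast; ring_nf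
  set G : ℝ → ℝ := fun r => ∫ y in {y : ℤ_[p] | r ≤ ‖y‖}, ‖y‖⁻¹ ∂μ
  have hG (k : ℕ) : G (p ^ (-k : ℤ)) = (k + 1) * (1 - (p : ℝ)⁻¹) :=
    setIntegral_zpow_le_norm_inv μ k
  have hmax (j : ℕ) (hj : j ∈ Finset.range m) :
      max ‖η‖ (((p : ℝ) ^ (-j : ℤ)) ^ 2) = p ^ (-(2 * j : ℕ) : ℤ) := by
    rw [hη, hsq_zpow, max_eq_right (zpow_le_zpow_right₀ hp1.le (by simp at hj; omega))]
  simp_rw [norm_sub_sq_eq_max hodd hsq]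
  rw [integral_comp_norm_of_eqOn_closedBall μ (fun t => G (max ‖η‖ (t ^ 2))) m (G ‖η‖) ?_,
    Finset.sum_congr rfl fun j hj => by rw [hmax j hj, hG, measureReal_sphere_zero],
    measureReal_closedBall_zero, hη, hG]
  · simp only [zpow_neg, zpow_natCast, ← inv_pow]
    calc _ = (1 + (p : ℝ)⁻¹)⁻¹ * (1 + (p : ℝ)⁻¹ - 2 * (p : ℝ)⁻¹ ^ (m + 1)) := by
          rw [← sum_range_odd_mul_geom_add]
          push_cast
          congr 2
          · ring
          · exact Finset.sum_congr rfl fun j _ => by ring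
      _ = _ := by simp only [inv_pow]; field_simp; ring
  · intro x hx
    rw [max_eq_left ((pow_le_pow_left₀ (norm_nonneg x) hx 2).trans_eq (by rw [hsq_zpow, hη]))]

/-- For an odd prime `p`, a Haar probability measure `μ` on `ℤ_p`, and a
nonzero `η ∈ ℤ_p` of even valuation `2m` which is not a square in `ℚ_p`,
`(1 + p⁻¹)⁻¹ · ∫_x ( ∫_{{y : |η − x²| ≤ |y|}} |y|⁻¹ dμ ) dμ = 1 − 2·p^{−m}/(p+1)`. -/
theorem stmt_18 (p : ℕ) [Fact p.Prime] (hodd : p ≠ 2)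
    [MeasurableSpace ℤ_[p]] [BorelSpace ℤ_[p]]
    (μ : Measure ℤ_[p]) [μ.IsAddHaarMeasure] (hμ : μ Set.univ = 1)
    (η : ℤ_[p]) (hη : η ≠ 0) (m : ℕ) (hval : η.valuation = 2 * m)
    (hsq : ¬ ∃ x : ℚ_[p], x ^ 2 = (η : ℚ_[p])) :
    (1 + (p : ℝ)⁻¹)⁻¹ *
        ∫ x : ℤ_[p], (∫ y in {y : ℤ_[p] | ‖η - x ^ 2‖ ≤ ‖y‖}, ‖y‖⁻¹ ∂μ) ∂μ =
      1 - 2 * (p : ℝ) ^ (-(m : ℤ)) / ((p : ℝ) + 1) :=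
  stmt_18_general p hodd μ hμ η m hval hsq
end

section
/- Let p be an odd prime, μ the Haar probability measure on Z_p, and η ∈ Z_p a nonzero element of odd valuation 2m+1. Then (1 + p^{−1})^{−1} · ∫_{x ∈ Z_p} ( ∫_{{y ∈ Z_p : |η − x²|_p ≤ |y|_p}} |y|_p^{−1} dμ(y) ) dμ(x) = 1 − p^{−(m+1)}. -/
/-!
Both integrands depend only on norms, which in `ℤ_p` take the values `p^{-v}`. The ball of radius
`p^{-n}` is the ideal `(p^n)`, an additive subgroup of index `p^n`, so a Haar probability measure
gives it mass `p^{-n}`; hence a function constant on each sphere `‖x‖ = p^{-v}`, `v < N`, and on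
the ball of radius `p^{-N}` integrates to a finite sum. This gives
`∫_{‖y‖ ≥ p^{-k}} ‖y‖⁻¹ = (k + 1)(1 - p⁻¹)` for the inner integral. Since `val η` is odd,
`‖η - x²‖ = max ‖η‖ ‖x‖² = p^{-min(2v, 2m+1)}` on the sphere of radius `p^{-v}`, and the outer
sum telescopes to `(1 + p⁻¹)(1 - p^{-(m+1)})`.
-/

open MeasureTheory Metric Finset

lemma sum_odd_mul_sub_pow {R : Type*} [CommRing R] (q : R) (n : ℕ) :
    ∑ v ∈ range n, (2 * v + 1) * (1 - q) * (q ^ v - q ^ (v + 1)) + 2 * n * (1 - q) * q ^ n =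
      (1 + q) * (1 - q ^ n) := by
  induction n with
  | zero => simp
  | succ n ih =>
    rw [sum_range_succ]
    push_cast
    linear_combination ih

namespace PadicInt

variable {p : ℕ} [Fact p.Prime]

lemma norm_eq_inv_pow_valuation {x : ℤ_[p]} (hx : x ≠ 0) : ‖x‖ = (p : ℝ)⁻¹ ^ x.valuation := by
  rw [norm_eq_zpow_neg_valuation hx, zpow_neg, zpow_natCast, inv_pow]

lemma inv_natCast_pos : (0 : ℝ) < (p : ℝ)⁻¹ := by
  have := (Fact.out : p.Prime).pos
  positivity

lemma inv_natCast_lt_one : (p : ℝ)⁻¹ < 1 :=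
  inv_lt_one_of_one_lt₀ (by exact_mod_cast (Fact.out : p.Prime).one_lt)

lemma inv_pow_lt_inv_pow_iff {m n : ℕ} : (p : ℝ)⁻¹ ^ m < (p : ℝ)⁻¹ ^ n ↔ n < m :=
  pow_lt_pow_iff_right_of_lt_one₀ inv_natCast_pos inv_natCast_lt_one

lemma inv_pow_le_inv_pow_iff {m n : ℕ} : (p : ℝ)⁻¹ ^ m ≤ (p : ℝ)⁻¹ ^ n ↔ n ≤ m :=
  pow_le_pow_iff_right_of_lt_one₀ inv_natCast_pos inv_natCast_lt_one

lemma inv_pow_inj {m n : ℕ} : (p : ℝ)⁻¹ ^ m = (p : ℝ)⁻¹ ^ n ↔ m = n :=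
  pow_right_inj₀ inv_natCast_pos inv_natCast_lt_one.ne

lemma index_span_pow (n : ℕ) :
    (Ideal.span {(p : ℤ_[p]) ^ n}).toAddSubgroup.index = p ^ n := by
  let f := (toZModPow n : ℤ_[p] →+* ZMod (p ^ n)).toAddMonoidHom
  have hker : (Ideal.span {(p : ℤ_[p]) ^ n}).toAddSubgroup = f.ker := by
    ext x
    simp [f, ← ker_toZModPow]
  rw [hker, AddSubgroup.index_ker, AddMonoidHom.range_eq_top.2 (ZMod.ringHom_surjective _),
    AddSubgroup.card_top, Nat.card_zmod]

lemma closedBall_inv_pow_eq_span (n : ℕ) :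
    closedBall (0 : ℤ_[p]) ((p : ℝ)⁻¹ ^ n) = (Ideal.span {(p : ℤ_[p]) ^ n} : Set ℤ_[p]) := by
  ext x
  rw [mem_closedBall_zero_iff, SetLike.mem_coe, ← norm_le_pow_iff_mem_span_pow, zpow_neg,
    zpow_natCast, inv_pow]

lemma norm_le_inv_pow_succ_iff {x : ℤ_[p]} {n : ℕ} :
    ‖x‖ ≤ (p : ℝ)⁻¹ ^ (n + 1) ↔ ‖x‖ < (p : ℝ)⁻¹ ^ n := by
  rcases eq_or_ne x 0 with rfl | hx
  · simp only [norm_zero]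
    exact iff_of_true (by positivity) (pow_pos inv_natCast_pos n)
  · rw [norm_eq_inv_pow_valuation hx, inv_pow_le_inv_pow_iff, inv_pow_lt_inv_pow_iff]
    omega

lemma sphere_inv_pow_eq_diff (n : ℕ) :
    sphere (0 : ℤ_[p]) ((p : ℝ)⁻¹ ^ n) =
      closedBall 0 ((p : ℝ)⁻¹ ^ n) \ closedBall 0 ((p : ℝ)⁻¹ ^ (n + 1)) := by
  ext x
  simp only [mem_sphere_zero_iff_norm, Set.mem_sdiff, mem_closedBall_zero_iff,
    norm_le_inv_pow_succ_iff, not_lt]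
  exact ⟨fun h => ⟨h.le, h.ge⟩, fun h => le_antisymm h.1 h.2⟩

section Haar

variable [MeasurableSpace ℤ_[p]] [BorelSpace ℤ_[p]] (μ : Measure ℤ_[p]) [μ.IsAddLeftInvariant]
  [IsProbabilityMeasure μ]

lemma measureReal_closedBall_inv_pow (n : ℕ) :
    μ.real (closedBall 0 ((p : ℝ)⁻¹ ^ n)) = (p : ℝ)⁻¹ ^ n := by
  let H := (Ideal.span {(p : ℤ_[p]) ^ n}).toAddSubgroup
  have : H.FiniteIndex := by
    rw [AddSubgroup.finiteIndex_iff, index_span_pow]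
    exact pow_ne_zero _ (Fact.out : p.Prime).ne_zero
  have hH : (H : Set ℤ_[p]) = closedBall 0 ((p : ℝ)⁻¹ ^ n) :=
    (closedBall_inv_pow_eq_span n).symm
  have h := H.index_mul_measure (hH ▸ isClosed_closedBall.measurableSet) μ
  rw [index_span_pow, measure_univ, hH] at h
  have hball : μ (closedBall 0 ((p : ℝ)⁻¹ ^ n)) = ((p ^ n : ℕ) : ENNReal)⁻¹ :=
    ENNReal.eq_inv_of_mul_eq_one_left (by rwa [mul_comm])
  rw [measureReal_def, hball, ENNReal.toReal_inv]
  simp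

lemma measureReal_sphere_inv_pow (n : ℕ) :
    μ.real (sphere 0 ((p : ℝ)⁻¹ ^ n)) = (p : ℝ)⁻¹ ^ n - (p : ℝ)⁻¹ ^ (n + 1) := by
  rw [sphere_inv_pow_eq_diff, measureReal_sdiff _ isClosed_closedBall.measurableSet,
    measureReal_closedBall_inv_pow, measureReal_closedBall_inv_pow]
  exact closedBall_subset_closedBall (pow_le_pow_of_le_one inv_natCast_pos.le
    inv_natCast_lt_one.le n.le_succ)

lemma integral_eq_sum_of_eq_on_spheres (N : ℕ) (g : ℤ_[p] → ℝ) (c : ℕ → ℝ)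
    (hsphere : ∀ v < N, ∀ x : ℤ_[p], ‖x‖ = (p : ℝ)⁻¹ ^ v → g x = c v)
    (hball : ∀ x : ℤ_[p], ‖x‖ ≤ (p : ℝ)⁻¹ ^ N → g x = c N) :
    ∫ x, g x ∂μ = ∑ v ∈ range N, c v * ((p : ℝ)⁻¹ ^ v - (p : ℝ)⁻¹ ^ (v + 1)) +
      c N * (p : ℝ)⁻¹ ^ N := by
  have hg : g = fun x => ∑ v ∈ range N, (sphere 0 ((p : ℝ)⁻¹ ^ v)).indicator (fun _ => c v) x +
      (closedBall 0 ((p : ℝ)⁻¹ ^ N)).indicator (fun _ => c N) x := by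
    funext x
    by_cases hx : ‖x‖ ≤ (p : ℝ)⁻¹ ^ N
    · rw [sum_eq_zero, zero_add, Set.indicator_of_mem (mem_closedBall_zero_iff.2 hx), hball x hx]
      intro v hv
      refine Set.indicator_of_notMem (fun hxv => ?_) _
      rw [mem_sphere_zero_iff_norm.1 hxv, inv_pow_le_inv_pow_iff] at hx
      exact absurd (mem_range.1 hv) (not_lt.2 hx)
    · have hx0 : x ≠ 0 := by
        rintro rfl
        exact hx (by simp only [norm_zero]; positivity)
      have hxv := norm_eq_inv_pow_valuation hx0
      have hvN : x.valuation < N := by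
        rwa [hxv, inv_pow_le_inv_pow_iff, not_le] at hx
      rw [sum_eq_single_of_mem _ (mem_range.2 hvN),
        Set.indicator_of_mem (mem_sphere_zero_iff_norm.2 hxv),
        Set.indicator_of_notMem (mt mem_closedBall_zero_iff.1 hx), add_zero, hsphere _ hvN x hxv]
      intro w _ hw
      refine Set.indicator_of_notMem (fun hxw => hw ?_) _
      rw [mem_sphere_zero_iff_norm, hxv, inv_pow_inj] at hxw
      exact hxw.symm
  have hint : ∀ (s : Set ℤ_[p]) (a : ℝ), MeasurableSet s → Integrable (s.indicator fun _ => a) μ :=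
    fun s a hs => (integrable_const a).indicator hs
  rw [hg, integral_add (integrable_finsetSum _ fun v _ => hint _ _ isClosed_sphere.measurableSet)
    (hint _ _ isClosed_closedBall.measurableSet),
    integral_finsetSum _ fun v _ => hint _ _ isClosed_sphere.measurableSet]
  simp only [integral_indicator_const _ isClosed_sphere.measurableSet,
    integral_indicator_const _ isClosed_closedBall.measurableSet, measureReal_sphere_inv_pow,
    measureReal_closedBall_inv_pow, smul_eq_mul, mul_comm]

lemma setIntegral_norm_inv_of_inv_pow_le_norm (k : ℕ) :
    ∫ y in {y : ℤ_[p] | (p : ℝ)⁻¹ ^ k ≤ ‖y‖}, ‖y‖⁻¹ ∂μ = (k + 1) * (1 - (p : ℝ)⁻¹) := by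
  rw [← integral_indicator (measurableSet_le measurable_const measurable_norm),
    integral_eq_sum_of_eq_on_spheres μ (k + 1) _ (fun v => if v ≤ k then ((p : ℝ)⁻¹ ^ v)⁻¹ else 0)]
  · have hterm : ∀ v ∈ range (k + 1), (if v ≤ k then ((p : ℝ)⁻¹ ^ v)⁻¹ else 0) *
        ((p : ℝ)⁻¹ ^ v - (p : ℝ)⁻¹ ^ (v + 1)) = 1 - (p : ℝ)⁻¹ := by
      intro v hv
      rw [if_pos (Nat.lt_succ_iff.1 (mem_range.1 hv)), pow_succ, ← mul_one_sub,
        inv_mul_cancel_left₀ (pow_ne_zero _ inv_natCast_pos.ne')]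
    rw [sum_congr rfl hterm, if_neg (by omega), sum_const, card_range, nsmul_eq_mul]
    push_cast
    ring
  · intro v hv x hx
    have hxk : x ∈ {y : ℤ_[p] | (p : ℝ)⁻¹ ^ k ≤ ‖y‖} := by
      change (p : ℝ)⁻¹ ^ k ≤ ‖x‖
      rw [hx, inv_pow_le_inv_pow_iff]
      omega
    rw [Set.indicator_of_mem hxk, if_pos (by omega), hx]
  · intro x hx
    have hxk : x ∉ {y : ℤ_[p] | (p : ℝ)⁻¹ ^ k ≤ ‖y‖} := not_le.2 (norm_le_inv_pow_succ_iff.1 hx)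
    rw [Set.indicator_of_notMem hxk, if_neg (by omega)]

end Haar

lemma norm_sub_sq_of_odd_valuation {η : ℤ_[p]} (hη : Odd η.valuation) (x : ℤ_[p]) :
    ‖η - x ^ 2‖ = max ‖η‖ (‖x‖ ^ 2) := by
  rcases eq_or_ne x 0 with rfl | hx
  · simp
  have hη0 : η ≠ 0 := by
    rintro rfl
    simp at hη
  rw [sub_eq_add_neg, norm_add_eq_max_of_ne, norm_neg, norm_pow]
  rw [norm_neg, norm_pow, norm_eq_inv_pow_valuation hη0, norm_eq_inv_pow_valuation hx, ← pow_mul,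
    Ne, inv_pow_inj]
  intro h
  exact Nat.not_even_iff_odd.2 hη ⟨x.valuation, by omega⟩

end PadicInt

open PadicInt

theorem stmt_19_general (p : ℕ) [Fact p.Prime]
    [MeasurableSpace ℤ_[p]] [BorelSpace ℤ_[p]]
    (μ : Measure ℤ_[p]) [μ.IsAddHaarMeasure] (hμ : μ Set.univ = 1)
    (η : ℤ_[p]) (m : ℕ) (hval : η.valuation = 2 * m + 1) :
    (1 + (p : ℝ)⁻¹)⁻¹ *
        ∫ x : ℤ_[p], (∫ y in {y : ℤ_[p] | ‖η - x ^ 2‖ ≤ ‖y‖}, ‖y‖⁻¹ ∂μ) ∂μ =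
      1 - (p : ℝ) ^ (-((m : ℤ) + 1)) := by
  have : IsProbabilityMeasure μ := ⟨hμ⟩
  set q : ℝ := (p : ℝ)⁻¹
  have hodd : Odd η.valuation := hval ▸ odd_two_mul_add_one m
  have hη : ‖η‖ = q ^ (2 * m + 1) := by
    rw [norm_eq_inv_pow_valuation (fun h => by simp [h] at hodd), hval]
  have hinner : ∀ x : ℤ_[p], ∀ k : ℕ, max ‖η‖ (‖x‖ ^ 2) = q ^ k →
      ∫ y in {y : ℤ_[p] | ‖η - x ^ 2‖ ≤ ‖y‖}, ‖y‖⁻¹ ∂μ = (k + 1) * (1 - q) := by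
    intro x k hk
    rw [norm_sub_sq_of_odd_valuation hodd, hk, setIntegral_norm_inv_of_inv_pow_le_norm]
  rw [integral_eq_sum_of_eq_on_spheres μ (m + 1) _
    (fun v => ((min (2 * v) (2 * m + 1) : ℕ) + 1) * (1 - q))]
  · have hsum := sum_odd_mul_sub_pow q (m + 1)
    rw [sum_congr rfl fun v hv => by rw [min_eq_left (by simp at hv; omega)], min_eq_right (by omega)]
    push_cast at hsum ⊢
    rw [show (2 * (m : ℝ) + 1 + 1) = 2 * (m + 1) by ring, hsum,
      inv_mul_cancel_left₀ (add_pos one_pos inv_natCast_pos).ne', zpow_neg, ← Nat.cast_succ,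
      zpow_natCast, inv_pow]
  · intro v hv x hx
    apply hinner
    rw [hx, hη, ← pow_mul', min_eq_left (by omega)]
    exact max_eq_right (inv_pow_le_inv_pow_iff.2 (by omega))
  · intro x hx
    apply hinner
    rw [hη, min_eq_right (by omega)]
    refine max_eq_left ((pow_le_pow_left₀ (norm_nonneg x) hx 2).trans ?_)
    rw [← pow_mul']
    exact inv_pow_le_inv_pow_iff.2 (by omega)

/-- For an odd prime `p`, a Haar probability measure `μ` on `ℤ_p`, and a
nonzero `η ∈ ℤ_p` of odd valuation `2m+1`,
`(1 + p⁻¹)⁻¹ · ∫_x ( ∫_{{y : |η − x²| ≤ |y|}} |y|⁻¹ dμ ) dμ = 1 − p^{−(m+1)}`. -/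
theorem stmt_19 (p : ℕ) [Fact p.Prime] (hodd : p ≠ 2)
    [MeasurableSpace ℤ_[p]] [BorelSpace ℤ_[p]]
    (μ : Measure ℤ_[p]) [μ.IsAddHaarMeasure] (hμ : μ Set.univ = 1)
    (η : ℤ_[p]) (hη : η ≠ 0) (m : ℕ) (hval : η.valuation = 2 * m + 1) :
    (1 + (p : ℝ)⁻¹)⁻¹ *
        ∫ x : ℤ_[p], (∫ y in {y : ℤ_[p] | ‖η - x ^ 2‖ ≤ ‖y‖}, ‖y‖⁻¹ ∂μ) ∂μ =
      1 - (p : ℝ) ^ (-((m : ℤ) + 1)) :=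
  stmt_19_general p μ hμ η m hval
end
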